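/- Let Γ = (V,E,s,t) be a finite multigraph and 𝓔 ⊆ E, yielding the subdivision Γ^𝓔. Let d*_Γ : (E → ℤ) → (V → ℤ) and d*_{Γ^𝓔} : ((E∖𝓔)⊕𝓔×Bool → ℤ) → (V⊕𝓔 → ℤ) be the boundary maps, d* z (v) := ∑_{a : target(a)=v} z a − ∑_{a : source(a)=v} z a. Then the restriction map ρ, sending z : (E∖𝓔)⊕𝓔×Bool → ℤ to the function on E given by e ↦ z(e) for e ∉ 𝓔 and e ↦ z(e,0) for e ∈ 𝓔, carries ker d*_{Γ^𝓔} into ker d*_Γ, and its restriction ker d*_{Γ^𝓔} → ker d*_Γ is a ℤ-linear bijection (the canonical isomorphism H₁(Γ^𝓔, ℤ) ≅ H₁(Γ, ℤ)). -/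
import Mathlib


noncomputable section

/-- Vertex type of the subdivision `Γ^𝓔`. -/
abbrev SubV (V : Type) {E : Type} (𝓔 : Finset E) : Type := V ⊕ {e // e ∈ 𝓔}

/-- Edge type of the subdivision `Γ^𝓔`. -/
abbrev SubE {E : Type} (𝓔 : Finset E) : Type := {e // e ∉ 𝓔} ⊕ ({e // e ∈ 𝓔} × Bool)

/-- Source map of the subdivision. -/
def subS {V E : Type} (s t : E → V) (𝓔 : Finset E) : SubE 𝓔 → SubV V 𝓔
  | .inl e => .inl (s e.1)
  | .inr (e, false) => .inl (s e.1)
  | .inr (e, true) => .inr e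

/-- Target map of the subdivision. -/
def subT {V E : Type} (s t : E → V) (𝓔 : Finset E) : SubE 𝓔 → SubV V 𝓔
  | .inl e => .inl (t e.1)
  | .inr (e, false) => .inr e
  | .inr (e, true) => .inl (t e.1)

/-- The boundary map `d*` with integer coefficients. -/
def dstar {V E : Type} (s t : E → V) (z : E → ℤ) (v : V) : ℤ :=
  (∑ᶠ e ∈ {e : E | t e = v}, z e) - ∑ᶠ e ∈ {e : E | s e = v}, z e

/-- The restriction map `ρ : C₁(Γ^𝓔, ℤ) → C₁(Γ, ℤ)`, remembering for each subdivided
edge the value on its first half. -/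
def restrictCycle {E : Type} [DecidableEq E] (𝓔 : Finset E) (z : SubE 𝓔 → ℤ) : E → ℤ :=
  fun e => if h : e ∈ 𝓔 then z (Sum.inr (⟨e, h⟩, false)) else z (Sum.inl ⟨e, h⟩)

lemma finsum_mem_setOf {E : Type} [Fintype E] (p : E → Prop) [DecidablePred p] (f : E → ℤ) :
    ∑ᶠ e ∈ {e | p e}, f e = ∑ e, if p e then f e else 0 := by
  rw [show {e | p e} = ↑(Finset.univ.filter p) by ext; simp, finsum_mem_coe_finset,
    Finset.sum_filter]

lemma dstar_eq {V E : Type} [Fintype E] [DecidableEq V] (s t : E → V) (z : E → ℤ) (v : V) :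
    dstar s t z v = ∑ e, ((if t e = v then z e else 0) - (if s e = v then z e else 0)) := by
  rw [dstar, finsum_mem_setOf, finsum_mem_setOf, Finset.sum_sub_distrib]

section
variable {V E : Type} [Fintype V] [Fintype E] [DecidableEq E]
  (s t : E → V) (𝓔 : Finset E)

lemma dstar_exc (z : SubE 𝓔 → ℤ) (e0 : {e // e ∈ 𝓔}) :
    dstar (subS s t 𝓔) (subT s t 𝓔) z (.inr e0)
      = z (.inr (e0, false)) - z (.inr (e0, true)) := by
  classical
  rw [dstar_eq, Fintype.sum_sum_type]
  simp only [Fintype.sum_prod_type, Fintype.sum_bool, subS, subT, reduceCtorEq, if_false,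
    Sum.inr.injEq, Subtype.ext_iff]
  rw [Finset.sum_sub_distrib]
  simp [Finset.sum_add_distrib, ← Subtype.ext_iff]
  ring

lemma dstar_main (z : SubE 𝓔 → ℤ)
    (hz : ∀ e : {e // e ∈ 𝓔}, z (.inr (e, true)) = z (.inr (e, false))) (v : V) :
    dstar (subS s t 𝓔) (subT s t 𝓔) z (.inl v) = dstar s t (restrictCycle 𝓔 z) v := by
  classical
  rw [dstar_eq, dstar_eq, Fintype.sum_sum_type,
    ← Fintype.sum_subtype_add_sum_subtype (· ∈ 𝓔) (fun e =>
      (if t e = v then restrictCycle 𝓔 z e else 0) - (if s e = v then restrictCycle 𝓔 z e else 0))]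
  simp only [Fintype.sum_prod_type, Fintype.sum_bool, subS, subT, Sum.inl.injEq,
    reduceCtorEq, if_false]
  have hval : ∀ e : {e // e ∈ 𝓔}, restrictCycle 𝓔 z e.1 = z (.inr (e, false)) := by
    intro e; exact dif_pos e.2
  have hval2 : ∀ e : {e // e ∉ 𝓔}, restrictCycle 𝓔 z e.1 = z (.inl e) := by
    intro e; exact dif_neg e.2
  simp only [hval, hval2, hz, sub_zero, zero_sub, sub_eq_add_neg, neg_zero, add_zero, zero_add]
  rw [add_comm]
  congr!

end

section
variable {V E : Type} [Fintype V] [Fintype E] [DecidableEq E]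
  (s t : E → V) (𝓔 : Finset E)

lemma ker_true_eq_false (z : SubE 𝓔 → ℤ)
    (hz : ∀ w, dstar (subS s t 𝓔) (subT s t 𝓔) z w = 0) (e : {e // e ∈ 𝓔}) :
    z (.inr (e, true)) = z (.inr (e, false)) := by
  have := hz (.inr e)
  rw [dstar_exc] at this
  linarith

end

/-- The canonical isomorphism `H₁(Γ^𝓔, ℤ) ≅ H₁(Γ, ℤ)`: the restriction map `ρ` carries
`ker d*_{Γ^𝓔}` into `ker d*_Γ`, is `ℤ`-linear, and restricts to a bijection between the
two kernels. -/
theorem cycle_space_iso (V E : Type) [Fintype V] [Fintype E] [DecidableEq E]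
    (s t : E → V) (𝓔 : Finset E) :
    IsLinearMap ℤ (restrictCycle 𝓔 (E := E)) ∧
    ∃ h1 : ∀ z : SubE 𝓔 → ℤ, (∀ w, dstar (subS s t 𝓔) (subT s t 𝓔) z w = 0) →
        (∀ v, dstar s t (restrictCycle 𝓔 z) v = 0),
      Function.Bijective
        (fun z : {z : SubE 𝓔 → ℤ // ∀ w, dstar (subS s t 𝓔) (subT s t 𝓔) z w = 0} =>
          (⟨restrictCycle 𝓔 z.1, h1 z.1 z.2⟩ :
            {w : E → ℤ // ∀ v, dstar s t w v = 0})) := by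

  have h1 : ∀ z : SubE 𝓔 → ℤ, (∀ w, dstar (subS s t 𝓔) (subT s t 𝓔) z w = 0) →
      (∀ v, dstar s t (restrictCycle 𝓔 z) v = 0) := by
    intro z hz v
    rw [← dstar_main s t 𝓔 z (ker_true_eq_false s t 𝓔 z hz) v]
    exact hz (.inl v)
  refine ⟨⟨fun x y => ?_, fun c x => ?_⟩, h1, fun z1 z2 h => ?_, fun w => ?_⟩
  · funext e
    simp only [restrictCycle, Pi.add_apply]
    split <;> rfl
  · funext e
    simp only [restrictCycle, Pi.smul_apply]
    split <;> rfl
  · have hres : restrictCycle 𝓔 z1.1 = restrictCycle 𝓔 z2.1 := congrArg Subtype.val h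
    apply Subtype.ext
    funext x
    match x with
    | .inl e =>
      have := congrFun hres e.1
      simpa only [restrictCycle, e.2, dif_neg, not_false_iff] using this
    | .inr (e, false) =>
      have := congrFun hres e.1
      simpa only [restrictCycle, e.2, dif_pos] using this
    | .inr (e, true) =>
      rw [ker_true_eq_false s t 𝓔 z1.1 z1.2 e, ker_true_eq_false s t 𝓔 z2.1 z2.2 e]
      have := congrFun hres e.1
      simpa only [restrictCycle, e.2, dif_pos] using this
  · refine ⟨⟨Sum.elim (fun e => w.1 e.1) (fun p => w.1 p.1.1), ?_⟩, ?_⟩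
    · have hrw : restrictCycle 𝓔 (Sum.elim (fun e : {e // e ∉ 𝓔} => w.1 e.1)
          (fun p : {e // e ∈ 𝓔} × Bool => w.1 p.1.1)) = w.1 := by
        funext e
        simp only [restrictCycle]
        split <;> rfl
      intro u
      match u with
      | .inl v =>
        rw [dstar_main s t 𝓔 (Sum.elim (fun e : {e // e ∉ 𝓔} => w.1 e.1)
          (fun p : {e // e ∈ 𝓔} × Bool => w.1 p.1.1)) (fun e => rfl) v, hrw]
        exact w.2 v
      | .inr e =>
        rw [dstar_exc]
        simp
    · apply Subtype.ext
      funext e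
      simp only [restrictCycle]
      split <;> rfl


end
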